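/- Let Ω₁*, Ω₂*, Ω₃* be three disjoint quasi-open subsets of the sphere ∂B_1 ⊂ ℝ^d, each of positive capacity, and for a subset Ω ⊂ ∂B_1 let α(Ω) > 0 be the unique positive root of α(α + d - 2) = λ₁(Ω), where λ₁(Ω) is the first Dirichlet eigenvalue of the Laplace–Beltrami operator on Ω. If for every pair i ≠ j one has α(Ωᵢ*) + α(Ωⱼ*) ≥ 2, with equality for some pair forcing the pair to cover the sphere up to a null set (and hence the third set to have α = +∞), then α(Ω₁*) + α(Ω₂*) + α(Ω₃*) > 3. -/

import Mathlib

open MeasureTheory Metric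

/-! If `a 0 + a 1 + a 2 ≤ 3`, adding the pairwise bounds `2 ≤ a 0 + a 2` and `2 ≤ a 1 + a 2`
forces the equality case `a 0 + a 1 = 2`. Then `Ω 0 ∪ Ω 1` covers the sphere up to a null set,
and since `Ω 2` meets both only in null sets, `Ω 2` itself would be null. -/

lemma add_eq_two_of_pairwise_two_le_of_sum_le_three {x y z : ℝ} (hxy : 2 ≤ x + y)
    (hxz : 2 ≤ x + z) (hyz : 2 ≤ y + z) (hsum : x + y + z ≤ 3) : x + y = 2 := by
  linarith

lemma measure_eq_zero_of_ae_covered {α : Type*} [MeasurableSpace α] (μ : Measure α)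
    {S A B C : Set α} (hCS : C ⊆ S) (hcover : μ (S \ (A ∪ B)) = 0)
    (hCA : μ (C ∩ A) = 0) (hCB : μ (C ∩ B) = 0) : μ C = 0 := by
  have hC : C ⊆ S \ (A ∪ B) ∪ C ∩ A ∪ C ∩ B := fun x hx => by
    have := hCS hx
    by_cases hA : x ∈ A <;> by_cases hB : x ∈ B <;> simp_all
  exact measure_mono_null hC (measure_union_null (measure_union_null hcover hCA) hCB)

theorem three_phase_sphere_partition_general (d : ℕ)
    (Ω : Fin 3 → Set (EuclideanSpace ℝ (Fin d)))
    (hsub : ∀ i, Ω i ⊆ sphere (0 : EuclideanSpace ℝ (Fin d)) 1)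
    (hdisj : ∀ i j, i ≠ j → μH[(d : ℝ) - 1] (Ω i ∩ Ω j) = 0)
    (hpos : ∀ i, 0 < μH[(d : ℝ) - 1] (Ω i))
    (a : Fin 3 → ℝ)
    (hFH : ∀ i j, i ≠ j → 2 ≤ a i + a j)
    (hcover : ∀ i j, i ≠ j → a i + a j = 2 →
      μH[(d : ℝ) - 1] (sphere (0 : EuclideanSpace ℝ (Fin d)) 1 \ (Ω i ∪ Ω j)) = 0) :
    3 < a 0 + a 1 + a 2 := by
  by_contra! hsum
  have h01 : a 0 + a 1 = 2 := add_eq_two_of_pairwise_two_le_of_sum_le_three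
    (hFH 0 1 (by decide)) (hFH 0 2 (by decide)) (hFH 1 2 (by decide)) hsum
  exact (hpos 2).ne' <| measure_eq_zero_of_ae_covered _ (hsub 2) (hcover 0 1 (by decide) h01)
    (hdisj 2 0 (by decide)) (hdisj 2 1 (by decide))

/-- Three-phase spectral partition inequality on the sphere.  For disjoint nonnegligible
subsets `Ω₁*, Ω₂*, Ω₃*` of `∂B_1`, let `α(Ωᵢ*) = a i > 0` be the unique positive root of
`α(α + d - 2) = λ₁(Ωᵢ*)` (first Dirichlet eigenvalue of the Laplace–Beltrami operator).
If `a i + a j ≥ 2` for all `i ≠ j`, and equality for a pair forces that pair to cover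
the sphere up to an `H^{d-1}`-null set, then `a 0 + a 1 + a 2 > 3`. -/
theorem three_phase_sphere_partition (d : ℕ) (hd : 2 ≤ d)
    (Ω : Fin 3 → Set (EuclideanSpace ℝ (Fin d)))
    (hsub : ∀ i, Ω i ⊆ sphere (0 : EuclideanSpace ℝ (Fin d)) 1)
    (hdisj : ∀ i j, i ≠ j → μH[(d : ℝ) - 1] (Ω i ∩ Ω j) = 0)
    (hpos : ∀ i, 0 < μH[(d : ℝ) - 1] (Ω i))
    (lam : Set (EuclideanSpace ℝ (Fin d)) → ℝ) (a : Fin 3 → ℝ)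
    (ha : ∀ i, 0 < a i ∧ a i * (a i + d - 2) = lam (Ω i))
    (hFH : ∀ i j, i ≠ j → 2 ≤ a i + a j)
    (hcover : ∀ i j, i ≠ j → a i + a j = 2 →
      μH[(d : ℝ) - 1] (sphere (0 : EuclideanSpace ℝ (Fin d)) 1 \ (Ω i ∪ Ω j)) = 0) :
    3 < a 0 + a 1 + a 2 :=
  three_phase_sphere_partition_general d Ω hsub hdisj hpos a hFH hcover
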